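/- arXiv:1507.04575 — 3 statements merged into one kernel-verified Lean document; each statement's English description precedes it below -/
import Mathlib

section
/- If λ is an H-eigenvalue of a real m-order n-dimensional tensor A with n ≥ 2, then there exist distinct indices i, j such that |λ - a_{i...i}|·(|λ - a_{j...j}| - r_j^i(A)) ≤ r_i(A)·|a_{j i...i}|, where r_j^i(A) = r_j(A) - |a_{j i...i}|. -/
open Finset

section TensorDefs

variable {ι : Type*} [Fintype ι] [DecidableEq ι] {k : ℕ}

/-- diagonal entry `a_{i…i}` of an `(k+1)`-order tensor given by its row slices -/
def diagT (A : ι → (Fin k → ι) → ℝ) (i : ι) : ℝ := A i (fun _ => i)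

/-- the off-diagonal multi-indices of row `i` -/
def offT (k : ℕ) (i : ι) : Finset (Fin k → ι) :=
  Finset.univ.filter (fun t => t ≠ (fun _ => i))

/-- the multi-indices different from `(i,…,i)` and `(j,…,j)` -/
def offT2 (k : ℕ) (i j : ι) : Finset (Fin k → ι) :=
  Finset.univ.filter (fun t => t ≠ (fun _ => i) ∧ t ≠ (fun _ => j))

/-- `r_i(A)` -/
def rT (A : ι → (Fin k → ι) → ℝ) (i : ι) : ℝ := ∑ t ∈ offT k i, |A i t|

/-- `r_j^i(A)` -/
def rT2 (A : ι → (Fin k → ι) → ℝ) (j i : ι) : ℝ := ∑ t ∈ offT2 k i j, |A j t|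

/-- `β_i(A) = max{0, off-diagonal entries of row i}` -/
noncomputable def betaT (A : ι → (Fin k → ι) → ℝ) (i : ι) : ℝ :=
  (insert (0:ℝ) ((offT k i).image (A i))).max' (Finset.insert_nonempty _ _)

/-- `γ_i(A) = min{0, off-diagonal entries of row i}` -/
noncomputable def gammaT (A : ι → (Fin k → ι) → ℝ) (i : ι) : ℝ :=
  (insert (0:ℝ) ((offT k i).image (A i))).min' (Finset.insert_nonempty _ _)

/-- `Δ_i(A)` -/
noncomputable def deltaT (A : ι → (Fin k → ι) → ℝ) (i : ι) : ℝ :=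
  ∑ t ∈ offT k i, (betaT A i - A i t)

/-- `Θ_i(A)` -/
noncomputable def thetaT (A : ι → (Fin k → ι) → ℝ) (i : ι) : ℝ :=
  ∑ t ∈ offT k i, (A i t - gammaT A i)

/-- `Δ_j^i(A)` -/
noncomputable def deltaT2 (A : ι → (Fin k → ι) → ℝ) (j i : ι) : ℝ :=
  ∑ t ∈ offT2 k i j, (betaT A j - A j t)

/-- `Θ_j^i(A)` -/
noncomputable def thetaT2 (A : ι → (Fin k → ι) → ℝ) (j i : ι) : ℝ :=
  ∑ t ∈ offT2 k i j, (A j t - gammaT A j)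

/-- `Ā`: the `k`-th row tensor of `A` multiplied by `sign(a_{k…k})` -/
noncomputable def barT (A : ι → (Fin k → ι) → ℝ) : ι → (Fin k → ι) → ℝ :=
  fun i t => Real.sign (diagT A i) * A i t

/-- double `B`-tensor -/
def DoubleB (A : ι → (Fin k → ι) → ℝ) : Prop :=
  (∀ i, betaT A i < diagT A i) ∧
  (∀ i, deltaT A i ≤ diagT A i - betaT A i) ∧
  (∀ i j, i ≠ j → deltaT A i * deltaT A j <
    (diagT A i - betaT A i) * (diagT A j - betaT A j))

/-- quasi-double `B`-tensor -/
def QuasiDoubleB (A : ι → (Fin k → ι) → ℝ) : Prop :=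
  (∀ i, betaT A i < diagT A i) ∧
  ∀ i j, i ≠ j → (betaT A i - A j (fun _ => i)) * deltaT A j <
    (diagT A i - betaT A i) * (diagT A j - betaT A j - deltaT2 A j i)

/-- symmetric tensor of order `k+1` (row form) -/
def SymT (A : ι → (Fin k → ι) → ℝ) : Prop :=
  ∀ σ : Equiv.Perm (Fin (k+1)), ∀ t : Fin (k+1) → ι,
    A ((t ∘ σ) 0) (Fin.tail (t ∘ σ)) = A (t 0) (Fin.tail t)

end TensorDefs

/-!
Take `t` with `|x t|` maximal and any `s ≠ t`. Row `s` of the eigen-equation gives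
`|λ - a_s| |x_s|^k ≤ r_s(A) |x_t|^k`, and row `t`, with the entry `a_{t s…s}` split off, gives
`(|λ - a_t| - r_t^s(A)) |x_t|^k ≤ |a_{t s…s}| |x_s|^k`. Multiplying the two inequalities and
cancelling `|x_t|^k > 0` yields the bound, with no sign discussion needed.
-/

section HEigenvalue

variable {ι : Type*} {k : ℕ}

theorem abs_prod_comp_le_pow {x : ι → ℝ} {M : ℝ} (hM : ∀ i, |x i| ≤ M) (δ : Fin k → ι) :
    |∏ r, x (δ r)| ≤ M ^ k := by
  rw [Finset.abs_prod]
  calc ∏ r, |x (δ r)| ≤ ∏ _r : Fin k, M :=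
        Finset.prod_le_prod (fun r _ => abs_nonneg _) (fun r _ => hM _)
    _ = M ^ k := by simp

theorem sum_abs_mul_prod_le {x : ι → ℝ} {M : ℝ} (hM : ∀ i, |x i| ≤ M)
    (a : (Fin k → ι) → ℝ) (S : Finset (Fin k → ι)) :
    ∑ δ ∈ S, |a δ * ∏ r, x (δ r)| ≤ (∑ δ ∈ S, |a δ|) * M ^ k := by
  rw [Finset.sum_mul]
  refine Finset.sum_le_sum fun δ _ => ?_
  rw [abs_mul]
  exact mul_le_mul_of_nonneg_left (abs_prod_comp_le_pow hM δ) (abs_nonneg _)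

variable [Fintype ι] [DecidableEq ι]

/-- `(A x^{m-1})_i` for the order-`(k+1)` tensor `A`. -/
def tensorApply (A : ι → (Fin k → ι) → ℝ) (x : ι → ℝ) (i : ι) : ℝ :=
  ∑ t : Fin k → ι, A i t * ∏ s, x (t s)

variable {A : ι → (Fin k → ι) → ℝ} {lam : ℝ} {x : ι → ℝ}

theorem sub_diagT_mul_pow_eq {i : ι} (heig : tensorApply A x i = lam * x i ^ k) :
    (lam - diagT A i) * x i ^ k = ∑ δ ∈ offT k i, A i δ * ∏ r, x (δ r) := by
  have hsplit := Finset.add_sum_erase Finset.univ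
    (fun δ : Fin k → ι => A i δ * ∏ r, x (δ r)) (Finset.mem_univ fun _ => i)
  rw [offT, Finset.filter_ne']
  simp only [Finset.prod_const, Finset.card_univ, Fintype.card_fin] at hsplit
  rw [tensorApply] at heig
  rw [diagT]
  linarith

theorem abs_sub_diagT_mul_le {M : ℝ} (hM : ∀ i, |x i| ≤ M) {i : ι}
    (heig : tensorApply A x i = lam * x i ^ k) :
    |lam - diagT A i| * |x i| ^ k ≤ rT A i * M ^ k := by
  rw [← abs_pow, ← abs_mul, sub_diagT_mul_pow_eq heig]
  exact (Finset.abs_sum_le_sum_abs _ _).trans (sum_abs_mul_prod_le hM _ _)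

theorem abs_sub_diagT_mul_le_add {M : ℝ} (hM : ∀ i, |x i| ≤ M) {j : ι}
    (heig : tensorApply A x j = lam * x j ^ k) (i : ι) :
    |lam - diagT A j| * |x j| ^ k ≤ |A j (fun _ => i)| * |x i| ^ k + rT2 A j i * M ^ k := by
  set f : (Fin k → ι) → ℝ := fun δ => |A j δ * ∏ r, x (δ r)|
  have hsub : offT k j ⊆ insert (fun _ => i) (offT2 k i j) := by
    intro δ hδ
    by_cases h : δ = fun _ => i
    · exact Finset.mem_insert.mpr (Or.inl h)
    · simp_all [offT, offT2]
  have hnotin : (fun _ => i) ∉ offT2 k i j := by simp [offT2]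
  calc |lam - diagT A j| * |x j| ^ k
      = |∑ δ ∈ offT k j, A j δ * ∏ r, x (δ r)| := by
        rw [← sub_diagT_mul_pow_eq heig, abs_mul, abs_pow]
    _ ≤ ∑ δ ∈ offT k j, f δ := Finset.abs_sum_le_sum_abs _ _
    _ ≤ ∑ δ ∈ insert (fun _ => i) (offT2 k i j), f δ :=
        Finset.sum_le_sum_of_subset_of_nonneg hsub fun _ _ _ => abs_nonneg _
    _ = |A j (fun _ => i)| * |x i| ^ k + ∑ δ ∈ offT2 k i j, f δ := by
        rw [Finset.sum_insert hnotin]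
        simp [f, abs_mul, abs_pow]
    _ ≤ _ := add_le_add_right (sum_abs_mul_prod_le hM (A j) (offT2 k i j)) _

end HEigenvalue

theorem mul_le_mul_of_cross_le {a b c R u v : ℝ} (ha : 0 ≤ a) (hb : 0 ≤ b) (hv : 0 < v)
    (hau : a * u ≤ R * v) (hcv : c * v ≤ b * u) : a * c ≤ R * b := by
  have : a * c * v ≤ R * b * v :=
    calc a * c * v = a * (c * v) := by ring
      _ ≤ a * (b * u) := mul_le_mul_of_nonneg_left hcv ha
      _ = a * u * b := by ring
      _ ≤ R * v * b := mul_le_mul_of_nonneg_right hau hb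
      _ = R * b * v := by ring
  exact le_of_mul_le_mul_right this hv

/-- Brauer-type bound for H-eigenvalues (order `k+1`). -/
theorem stmt1 {n k : ℕ} (hn : 2 ≤ n) (A : Fin n → (Fin k → Fin n) → ℝ) (lam : ℝ)
    (x : Fin n → ℝ) (hx : x ≠ 0)
    (heig : ∀ i, (∑ t : Fin k → Fin n, A i t * ∏ s, x (t s)) = lam * x i ^ k) :
    ∃ i j, i ≠ j ∧
      |lam - diagT A i| * (|lam - diagT A j| - rT2 A j i) ≤ rT A i * |A j (fun _ => i)| := by
  have : Nontrivial (Fin n) := Fin.nontrivial_iff_two_le.mpr hn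
  obtain ⟨t, ht⟩ := Finite.exists_max fun i => |x i|
  obtain ⟨s, hst⟩ := exists_ne t
  have hxt : 0 < |x t| := by
    obtain ⟨l, hl⟩ := Function.ne_iff.mp hx
    exact (abs_pos.mpr hl).trans_le (ht l)
  refine ⟨s, t, hst, mul_le_mul_of_cross_le (abs_nonneg _) (abs_nonneg _) (pow_pos hxt k)
    (abs_sub_diagT_mul_le ht (heig s)) ?_⟩
  have := abs_sub_diagT_mul_le_add ht (heig t) s
  linarith
end

section
/- Let A be a real m-order n-dimensional symmetric tensor with m even, a_{i...i} > 0 for all i, and suppose A is quasi-doubly strictly diagonally dominant: |a_{i...i}|(|a_{j...j}| − r_j^i(A)) > r_i(A)|a_{j i...i}| for all i ≠ j. Then A is positive definite. -/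
open Finset

/-!
Let `y` minimise `A y^m` on the set `∑ yᵢ^m = 1`, which is compact because `m` is even, and put
`λ = A y^m`; by homogeneity `A z^m ≥ λ ∑ zᵢ^m` for every `z`, so it suffices that `λ > 0`.
Differentiating along each coordinate, the symmetry of `A` turns the first-order condition into
the H-eigen-equation `(A y^{m-1})ᵢ = λ yᵢ^{m-1}`. If `λ ≤ 0`, take `i` with `|yᵢ|` maximal and
any `j ≠ i`: the eigen-equations of rows `i` and `j` give
`(aᵢ - rᵢʲ - λ)|yᵢ|^{m-1} ≤ |a_{ij…j}| |yⱼ|^{m-1}` and `(aⱼ - λ)|yⱼ|^{m-1} ≤ rⱼ |yᵢ|^{m-1}`,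
whose product contradicts quasi-double strict diagonal dominance.
-/

open Finset

theorem Fin.prod_erase_eq_prod_succAbove {M : Type*} [CommMonoid M] {n : ℕ}
    (f : Fin (n+1) → M) (s : Fin (n+1)) : ∏ j ∈ univ.erase s, f j = ∏ j, f (s.succAbove j) := by
  rw [← compl_singleton, ← Fin.image_succAbove_univ, prod_image Fin.succAbove_right_injective.injOn]

theorem abs_sum_mul_prod_le {ι : Type*} {k : ℕ} (s : Finset (Fin k → ι)) (a : (Fin k → ι) → ℝ)
    {x : ι → ℝ} {M : ℝ} (hM : ∀ l, |x l| ≤ M) :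
    |∑ u ∈ s, a u * ∏ w, x (u w)| ≤ (∑ u ∈ s, |a u|) * M ^ k := by
  have hprod (u : Fin k → ι) : |∏ w, x (u w)| ≤ M ^ k :=
    calc |∏ w, x (u w)| = ∏ w, |x (u w)| := abs_prod _ _
      _ ≤ ∏ _w : Fin k, M := prod_le_prod (fun w _ => abs_nonneg _) fun w _ => hM (u w)
      _ = M ^ k := by simp
  calc |∑ u ∈ s, a u * ∏ w, x (u w)| ≤ ∑ u ∈ s, |a u| * |∏ w, x (u w)| := by
        simpa only [abs_mul] using abs_sum_le_sum_abs (fun u => a u * ∏ w, x (u w)) s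
    _ ≤ ∑ u ∈ s, |a u| * M ^ k :=
        sum_le_sum fun u _ => mul_le_mul_of_nonneg_left (hprod u) (abs_nonneg _)
    _ = (∑ u ∈ s, |a u|) * M ^ k := (sum_mul ..).symm

variable {ι : Type*} [Fintype ι] {k : ℕ}

-- `A x^m` and `(A x^{m-1})ᵢ` for the tensor of order `m = k + 1` given by its rows `A i`.
def tensorForm (A : ι → (Fin k → ι) → ℝ) (x : ι → ℝ) : ℝ :=
  ∑ t : Fin (k+1) → ι, A (t 0) (Fin.tail t) * ∏ s, x (t s)

def tensorRowForm (A : ι → (Fin k → ι) → ℝ) (x : ι → ℝ) (i : ι) : ℝ :=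
  ∑ u : Fin k → ι, A i u * ∏ s, x (u s)

def powSum (k : ℕ) (x : ι → ℝ) : ℝ := ∑ l, x l ^ (k+1)

def IsHEigenpair (A : ι → (Fin k → ι) → ℝ) (μ : ℝ) (x : ι → ℝ) : Prop :=
  x ≠ 0 ∧ ∀ i, tensorRowForm A x i = μ * x i ^ k

theorem tensorForm_smul (A : ι → (Fin k → ι) → ℝ) (c : ℝ) (x : ι → ℝ) :
    tensorForm A (c • x) = c ^ (k+1) * tensorForm A x := by
  simp only [tensorForm, mul_sum, Pi.smul_apply, smul_eq_mul, prod_mul_distrib, prod_const,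
    card_univ, Fintype.card_fin]
  exact sum_congr rfl fun t _ => by ring

theorem powSum_smul (c : ℝ) (x : ι → ℝ) : powSum k (c • x) = c ^ (k+1) * powSum k x := by
  simp only [powSum, mul_sum, Pi.smul_apply, smul_eq_mul, mul_pow]

theorem continuous_tensorForm (A : ι → (Fin k → ι) → ℝ) : Continuous (tensorForm A) := by
  unfold tensorForm
  fun_prop

theorem continuous_powSum : Continuous (powSum (ι := ι) k) := by
  unfold powSum
  fun_prop

section EvenOrder

variable (hev : Even (k + 1))
include hev

theorem powSum_nonneg (x : ι → ℝ) : 0 ≤ powSum k x :=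
  sum_nonneg fun l _ => hev.pow_nonneg (x l)

theorem powSum_eq_zero_iff {x : ι → ℝ} : powSum k x = 0 ↔ x = 0 := by
  simp [powSum, sum_eq_zero_iff_of_nonneg fun l _ => hev.pow_nonneg (x l), funext_iff]

theorem powSum_pos {x : ι → ℝ} (hx : x ≠ 0) : 0 < powSum k x :=
  (powSum_nonneg hev x).lt_of_ne' ((powSum_eq_zero_iff hev).not.mpr hx)

theorem isCompact_powSum_eq_one : IsCompact {x : ι → ℝ | powSum k x = 1} := by
  refine Metric.isCompact_of_isClosed_isBounded (isClosed_eq continuous_powSum continuous_const)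
    ((Metric.isBounded_closedBall (x := 0) (r := 1)).subset fun x hx => ?_)
  rw [mem_closedBall_zero_iff, pi_norm_le_iff_of_nonneg zero_le_one]
  intro l
  have hl : x l ^ (k+1) ≤ 1 :=
    (hx : powSum k x = 1) ▸ single_le_sum (fun l _ => hev.pow_nonneg (x l)) (mem_univ l)
  rwa [Real.norm_eq_abs, ← pow_le_one_iff_of_nonneg (abs_nonneg _) k.succ_ne_zero, hev.pow_abs]

theorem exists_forall_mul_powSum_le [Nonempty ι] (A : ι → (Fin k → ι) → ℝ) :
    ∃ y, powSum k y = 1 ∧ ∀ z, tensorForm A y * powSum k z ≤ tensorForm A z := by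
  classical
  obtain ⟨i⟩ := ‹Nonempty ι›
  have hne : {x : ι → ℝ | powSum k x = 1}.Nonempty :=
    ⟨Pi.single i 1, by simp [powSum, Pi.single_apply]⟩
  obtain ⟨y, hy, hmin⟩ :=
    (isCompact_powSum_eq_one hev).exists_isMinOn hne (continuous_tensorForm A).continuousOn
  refine ⟨y, hy, fun z => ?_⟩
  rcases (powSum_nonneg hev z).eq_or_lt with hz | hz
  · rw [← hz, mul_zero, (powSum_eq_zero_iff hev).mp hz.symm]
    simpa using (tensorForm_smul A 0 0).ge
  · set d := powSum k z ^ ((k + 1 : ℕ) : ℝ)⁻¹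
    have hd : d ^ (k+1) = powSum k z := Real.rpow_inv_natCast_pow hz.le k.succ_ne_zero
    have hd0 : d ≠ 0 := (Real.rpow_pos_of_pos hz _).ne'
    have hw : powSum k (d⁻¹ • z) = 1 := by
      rw [powSum_smul, inv_pow, hd, inv_mul_cancel₀ hz.ne']
    calc tensorForm A y * powSum k z = d ^ (k+1) * tensorForm A y := by rw [hd, mul_comm]
      _ ≤ d ^ (k+1) * tensorForm A (d⁻¹ • z) :=
          mul_le_mul_of_nonneg_left (hmin hw) (hd ▸ hz.le)
      _ = tensorForm A z := by
          rw [tensorForm_smul, ← mul_assoc, ← mul_pow, mul_inv_cancel₀ hd0, one_pow, one_mul]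

end EvenOrder

variable [DecidableEq ι]

theorem hasDerivAt_powSum_update (x : ι → ℝ) (i : ι) :
    HasDerivAt (fun ε => powSum k (Function.update x i ε)) ((k + 1) * x i ^ k) (x i) := by
  have h (ε : ℝ) :
      powSum k (Function.update x i ε) = ε ^ (k+1) + ∑ l ∈ univ \ {i}, x l ^ (k+1) := by
    rw [powSum, ← sum_update_of_mem (mem_univ i)]
    exact sum_congr rfl fun l _ => Function.apply_update (fun _ y => y ^ (k+1)) x i ε l
  simp only [h]
  simpa using (hasDerivAt_pow (k+1) (x i)).add_const (∑ l ∈ univ \ {i}, x l ^ (k+1))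

namespace SymT

variable {A : ι → (Fin k → ι) → ℝ}

omit [Fintype ι] [DecidableEq ι] in
theorem apply_removeNth (hA : SymT A) (t : Fin (k+1) → ι) (s : Fin (k+1)) :
    A (t s) (s.removeNth t) = A (t 0) (Fin.tail t) := by
  have h := hA s.cycleRange.symm t
  rwa [← Fin.cons_removeNth_eq_comp_cycleRange_symm, Fin.cons_zero, Fin.tail_cons] at h

theorem sum_slot_eq_tensorRowForm (hA : SymT A) (x : ι → ℝ) (i : ι) (s : Fin (k+1)) :
    ∑ t : Fin (k+1) → ι, A (t 0) (Fin.tail t) *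
      (if t s = i then ∏ j, x (t (s.succAbove j)) else 0) = tensorRowForm A x i := by
  let g : ι × (Fin k → ι) → ℝ := fun p => if p.1 = i then A p.1 p.2 * ∏ j, x (p.2 j) else 0
  calc _ = ∑ t, g ((Fin.insertNthEquiv (fun _ => ι) s).symm t) := by
        refine sum_congr rfl fun t _ => ?_
        rw [← apply_removeNth hA t s]
        simp only [g, Fin.insertNthEquiv, Equiv.coe_fn_symm_mk, Fin.removeNth_apply]
        split_ifs <;> simp
    _ = ∑ p, g p := Equiv.sum_comp _ g
    _ = tensorRowForm A x i := by simp [g, Fintype.sum_prod_type, tensorRowForm]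

theorem hasDerivAt_tensorForm_update (hA : SymT A) (x : ι → ℝ) (i : ι) :
    HasDerivAt (fun ε => tensorForm A (Function.update x i ε))
      ((k + 1) * tensorRowForm A x i) (x i) := by
  have hprod (t : Fin (k+1) → ι) : HasDerivAt (fun ε => ∏ s, Function.update x i ε (t s))
      (∑ s, if t s = i then ∏ j, x (t (s.succAbove j)) else 0) (x i) := by
    refine (HasDerivAt.fun_finsetProd fun s _ =>
      hasDerivAt_pi.mp (hasDerivAt_update x i (x i)) (t s)).congr_deriv ?_
    simp [Pi.single_apply, Fin.prod_erase_eq_prod_succAbove]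
  have hsum : HasDerivAt (fun ε => tensorForm A (Function.update x i ε))
      (∑ t : Fin (k+1) → ι, A (t 0) (Fin.tail t) *
        ∑ s, if t s = i then ∏ j, x (t (s.succAbove j)) else 0) (x i) :=
    HasDerivAt.fun_sum fun t _ => (hprod t).const_mul _
  refine hsum.congr_deriv ?_
  simp_rw [mul_sum]
  rw [sum_comm, sum_congr rfl fun s _ => sum_slot_eq_tensorRowForm hA x i s]
  simp

theorem tensorRowForm_eq_of_forall_le (hA : SymT A) {μ : ℝ} {y : ι → ℝ}
    (hmin : ∀ z, μ * powSum k z ≤ tensorForm A z) (hy : tensorForm A y = μ * powSum k y)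
    (i : ι) : tensorRowForm A y i = μ * y i ^ k := by
  have hloc : IsLocalMin (fun ε => tensorForm A (Function.update y i ε)
      - μ * powSum k (Function.update y i ε)) (y i) :=
    Filter.Eventually.of_forall fun ε => by
      simpa [Function.update_eq_self, hy] using hmin (Function.update y i ε)
  have h := hloc.hasDerivAt_eq_zero
    ((hasDerivAt_tensorForm_update hA y i).sub ((hasDerivAt_powSum_update y i).const_mul μ))
  have hk : (k : ℝ) + 1 ≠ 0 := by positivity
  exact mul_left_cancel₀ hk (by linear_combination h)

theorem exists_isHEigenpair_forall_mul_powSum_le (hA : SymT A) (hev : Even (k + 1))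
    [Nonempty ι] : ∃ y, IsHEigenpair A (tensorForm A y) y ∧
      ∀ z, tensorForm A y * powSum k z ≤ tensorForm A z := by
  obtain ⟨y, hy, hmin⟩ := exists_forall_mul_powSum_le hev A
  refine ⟨y, ⟨?_, tensorRowForm_eq_of_forall_le hA hmin (by rw [hy, mul_one])⟩, hmin⟩
  rintro rfl
  simp [(powSum_eq_zero_iff hev).mpr rfl] at hy

end SymT

def tensorOffDiagRowForm (A : ι → (Fin k → ι) → ℝ) (x : ι → ℝ) (i : ι) : ℝ :=
  ∑ u ∈ offT k i, A i u * ∏ s, x (u s)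

def IsQuasiDoublySDD (A : ι → (Fin k → ι) → ℝ) : Prop :=
  ∀ i j, i ≠ j → rT A i * |A j (fun _ => i)| < |diagT A i| * (|diagT A j| - rT2 A j i)

variable {A : ι → (Fin k → ι) → ℝ}

theorem tensorRowForm_eq_diagT_add (A : ι → (Fin k → ι) → ℝ) (x : ι → ℝ) (i : ι) :
    tensorRowForm A x i = diagT A i * x i ^ k + tensorOffDiagRowForm A x i := by
  rw [tensorRowForm, ← add_sum_erase _ _ (mem_univ fun _ => i)]
  simp [diagT, tensorOffDiagRowForm, offT, filter_ne']

theorem abs_tensorOffDiagRowForm_le {x : ι → ℝ} {M : ℝ} (hM : ∀ l, |x l| ≤ M) (i : ι) :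
    |tensorOffDiagRowForm A x i| ≤ rT A i * M ^ k :=
  abs_sum_mul_prod_le _ _ hM

theorem abs_tensorOffDiagRowForm_le_of_ne (hk : k ≠ 0) {x : ι → ℝ} {i j : ι} (hji : j ≠ i)
    (hM : ∀ l, |x l| ≤ |x i|) :
    |tensorOffDiagRowForm A x i| ≤ |A i (fun _ => j)| * |x j| ^ k + rT2 A i j * |x i| ^ k := by
  have hconst : (fun _ => j : Fin k → ι) ≠ fun _ => i := fun h =>
    hji (congrFun h ⟨0, Nat.pos_of_ne_zero hk⟩)
  have hsplit : offT k i = insert (fun _ => j) (offT2 k j i) := by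
    ext u
    by_cases hu : u = fun _ => j <;> simp [offT, offT2, hu, hconst]
  have hnot : (fun _ => j : Fin k → ι) ∉ offT2 k j i := by simp [offT2]
  rw [tensorOffDiagRowForm, hsplit, sum_insert hnot]
  refine (abs_add_le _ _).trans (add_le_add (le_of_eq ?_) (abs_sum_mul_prod_le _ _ hM))
  simp [abs_mul]

theorem IsHEigenpair.sub_mul_abs_pow_le {μ : ℝ} {x : ι → ℝ} (h : IsHEigenpair A μ x) (i : ι) :
    (diagT A i - μ) * |x i| ^ k ≤ |tensorOffDiagRowForm A x i| := by
  have heq : (diagT A i - μ) * x i ^ k = -tensorOffDiagRowForm A x i := by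
    linear_combination (tensorRowForm_eq_diagT_add A x i).symm.trans (h.2 i)
  calc (diagT A i - μ) * |x i| ^ k ≤ |diagT A i - μ| * |x i| ^ k := by
        gcongr
        exact le_abs_self _
    _ = |tensorOffDiagRowForm A x i| := by rw [← abs_pow, ← abs_mul, heq, abs_neg]

theorem IsHEigenpair.pos (hk : k ≠ 0) (hdiag : ∀ i, 0 < diagT A i) (hq : IsQuasiDoublySDD A)
    {μ : ℝ} {x : ι → ℝ} (h : IsHEigenpair A μ x) : 0 < μ := by
  have : Nonempty ι := ⟨(Function.ne_iff.mp h.1).choose⟩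
  obtain ⟨i, hi⟩ : ∃ i, ∀ l, |x l| ≤ |x i| := by simpa using Finite.exists_max fun l => |x l|
  have hU : 0 < |x i| ^ k := by
    refine pow_pos (abs_pos.mpr fun hxi => h.1 (funext fun l => ?_)) k
    simpa [hxi] using hi l
  by_contra! hμ
  by_cases hj : ∀ j, j = i
  · have hoff : tensorOffDiagRowForm A x i = 0 :=
      sum_eq_zero fun u hu => absurd (funext fun s => hj (u s)) (mem_filter.mp hu).2
    have hI := h.sub_mul_abs_pow_le i
    rw [hoff, abs_zero] at hI
    nlinarith [hdiag i]
  obtain ⟨j, hji⟩ := not_forall.mp hj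
  have hI := (h.sub_mul_abs_pow_le i).trans (abs_tensorOffDiagRowForm_le_of_ne hk hji hi)
  have hJ := (h.sub_mul_abs_pow_le j).trans (abs_tensorOffDiagRowForm_le hi j)
  have hQ := hq j i hji
  rw [abs_of_pos (hdiag j), abs_of_pos (hdiag i)] at hQ
  have hr : 0 ≤ rT A j := sum_nonneg fun _ _ => abs_nonneg _
  have hc : 0 ≤ |A i (fun _ => j)| := abs_nonneg _
  have hp : 0 < diagT A i - rT2 A i j :=
    pos_of_mul_pos_right ((mul_nonneg hr hc).trans_lt hQ) (hdiag j).le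
  have key : (diagT A i - rT2 A i j - μ) * (diagT A j - μ) ≤ |A i (fun _ => j)| * rT A j := by
    refine le_of_mul_le_mul_right ?_ hU
    calc _ = (diagT A j - μ) * ((diagT A i - rT2 A i j - μ) * |x i| ^ k) := by ring
      _ ≤ (diagT A j - μ) * (|A i (fun _ => j)| * |x j| ^ k) :=
          mul_le_mul_of_nonneg_left (by linarith) (by linarith [hdiag j])
      _ = |A i (fun _ => j)| * ((diagT A j - μ) * |x j| ^ k) := by ring
      _ ≤ |A i (fun _ => j)| * (rT A j * |x i| ^ k) := mul_le_mul_of_nonneg_left hJ hc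
      _ = _ := by ring
  nlinarith [mul_nonneg hp.le (neg_nonneg.mpr hμ), mul_nonneg (hdiag j).le (neg_nonneg.mpr hμ)]

/-- An even-order symmetric Q-DSDD tensor with positive diagonal is positive definite. -/
theorem stmt4 {n k : ℕ} (A : Fin n → (Fin k → Fin n) → ℝ)
    (hev : Even (k + 1)) (hsym : SymT A)
    (hdiag : ∀ i, 0 < diagT A i)
    (hqdsdd : ∀ i j, i ≠ j → rT A i * |A j (fun _ => i)| <
      |diagT A i| * (|diagT A j| - rT2 A j i))
    (x : Fin n → ℝ) (hx : x ≠ 0) :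
    0 < ∑ t : Fin (k+1) → Fin n, A (t 0) (Fin.tail t) * ∏ s, x (t s) := by
  have hk : k ≠ 0 := by
    rintro rfl
    exact Nat.not_even_one hev
  have : Nonempty (Fin n) := ⟨(Function.ne_iff.mp hx).choose⟩
  obtain ⟨y, hy, hmin⟩ := SymT.exists_isHEigenpair_forall_mul_powSum_le hsym hev
  calc 0 < tensorForm A y * powSum k x := mul_pos (hy.pos hk hdiag hqdsdd) (powSum_pos hev hx)
    _ ≤ _ := hmin x
end

section
/- If A is a quasi-double B̄-tensor, then every principal subtensor A[α] is a quasi-double B̄-tensor, for any nonempty subset α of indices with |α| ≥ 2. -/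
open Finset

/-! Restriction to a subset of indices can only lower `β_i` and `Δ_j`, while `a_{i…i}` and
`a_{j i…i}` are unchanged. For tensors of order at least two the defining inequality of a
quasi-double `B`-tensor, after substituting `Δ_j^i = Δ_j - (β_j - a_{j i…i})`, reads
`(a_{i…i} - a_{j i…i}) Δ_j < (a_{i…i} - β_i) (a_{j…j} - a_{j i…i})`, which survives lowering
`β_i` and `Δ_j`: when `a_{j i…i} < a_{i…i}` both sides move the right way, otherwise the left
side is `≤ 0 <` the right side. For order one all off-diagonal data vanish. -/

open Finset

section Subtensor

variable {ι κ : Type*} {k : ℕ}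

/-- For `e` the inclusion of `α`, this is the principal subtensor `B[α]`. -/
def subT (e : κ ↪ ι) (B : ι → (Fin k → ι) → ℝ) : κ → (Fin k → κ) → ℝ :=
  fun a t => B (e a) (e ∘ t)

theorem diagT_subT (e : κ ↪ ι) (B : ι → (Fin k → ι) → ℝ) (a : κ) :
    diagT (subT e B) a = diagT B (e a) :=
  rfl

theorem barT_subT (e : κ ↪ ι) (B : ι → (Fin k → ι) → ℝ) :
    barT (subT e B) = subT e (barT B) :=
  rfl

variable [Fintype ι] [DecidableEq ι] [Fintype κ] [DecidableEq κ]

theorem betaT_nonneg (B : ι → (Fin k → ι) → ℝ) (i : ι) : 0 ≤ betaT B i :=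
  le_max' _ _ (mem_insert_self _ _)

theorem le_betaT (B : ι → (Fin k → ι) → ℝ) {i : ι} {t : Fin k → ι} (ht : t ∈ offT k i) :
    B i t ≤ betaT B i :=
  le_max' _ _ (mem_insert_of_mem (mem_image_of_mem _ ht))

theorem deltaT_nonneg (B : ι → (Fin k → ι) → ℝ) (i : ι) : 0 ≤ deltaT B i :=
  sum_nonneg fun _ ht => sub_nonneg.2 (le_betaT B ht)

theorem map_offT_subset (e : κ ↪ ι) (a : κ) :
    (offT k a).map (Function.Embedding.arrowCongrRight e) ⊆ offT k (e a) := by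
  intro u hu
  obtain ⟨t, ht, rfl⟩ := mem_map.1 hu
  simp only [offT, mem_filter, mem_univ, true_and] at ht ⊢
  exact fun h => ht (funext fun s => e.injective (congrFun h s))

theorem betaT_subT_le (e : κ ↪ ι) (B : ι → (Fin k → ι) → ℝ) (a : κ) :
    betaT (subT e B) a ≤ betaT B (e a) := by
  refine max'_le _ _ _ fun y hy => ?_
  rcases mem_insert.1 hy with rfl | hy
  · exact betaT_nonneg B (e a)
  · obtain ⟨t, ht, rfl⟩ := mem_image.1 hy
    exact le_betaT B (map_offT_subset e a (mem_map_of_mem _ ht))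

theorem deltaT_subT_le (e : κ ↪ ι) (B : ι → (Fin k → ι) → ℝ) (a : κ) :
    deltaT (subT e B) a ≤ deltaT B (e a) :=
  calc deltaT (subT e B) a
      ≤ ∑ t ∈ offT k a, (betaT B (e a) - B (e a) (e ∘ t)) :=
        sum_le_sum fun _ _ => sub_le_sub_right (betaT_subT_le e B a) _
    _ = ∑ u ∈ (offT k a).map (Function.Embedding.arrowCongrRight e),
          (betaT B (e a) - B (e a) u) :=
        by rw [sum_map]; rfl
    _ ≤ deltaT B (e a) :=
        sum_le_sum_of_subset_of_nonneg (map_offT_subset e a)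
          fun _ hu _ => sub_nonneg.2 (le_betaT B hu)

end Subtensor

section FirstOrder

variable {ι : Type*} [Fintype ι] [DecidableEq ι]

theorem offT_zero (i : ι) : offT 0 i = ∅ :=
  eq_empty_of_forall_notMem fun _ ht =>
    (mem_filter.1 ht).2 (funext fun s => s.elim0)

theorem betaT_zero (B : ι → (Fin 0 → ι) → ℝ) (i : ι) : betaT B i = 0 := by
  simp [betaT, offT_zero]

theorem quasiDoubleB_zero_iff (B : ι → (Fin 0 → ι) → ℝ) :
    QuasiDoubleB B ↔ ∀ i, 0 < diagT B i := by
  have hdelta (j : ι) : deltaT B j = 0 := by simp [deltaT, offT_zero]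
  have hdelta2 (j i : ι) : deltaT2 B j i = 0 := by
    simp [deltaT2, offT2, Subsingleton.elim _ (fun _ => i : Fin 0 → ι)]
  simp only [QuasiDoubleB, betaT_zero, hdelta, hdelta2, sub_zero, mul_zero]
  exact ⟨And.left, fun h => ⟨h, fun i j _ => mul_pos (h i) (h j)⟩⟩

end FirstOrder

section HigherOrder

variable {ι : Type*} [Fintype ι] [DecidableEq ι] {k : ℕ}

theorem const_mem_offT (hk : 0 < k) {i j : ι} (hij : i ≠ j) :
    (fun _ => i : Fin k → ι) ∈ offT k j := by
  simp only [offT, mem_filter, mem_univ, true_and]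
  exact fun h => hij (congrFun h ⟨0, hk⟩)

theorem offT_eq_insert_offT2 (hk : 0 < k) {i j : ι} (hij : i ≠ j) :
    offT k j = insert (fun _ => i) (offT2 k i j) := by
  ext t
  by_cases hti : t = fun _ => i
  · subst hti
    simpa [offT2] using const_mem_offT hk hij
  · simp [offT, offT2, hti]

theorem deltaT_eq_add_deltaT2 (hk : 0 < k) (B : ι → (Fin k → ι) → ℝ) {i j : ι} (hij : i ≠ j) :
    deltaT B j = (betaT B j - B j (fun _ => i)) + deltaT2 B j i := by
  rw [deltaT, deltaT2, offT_eq_insert_offT2 hk hij, sum_insert (by simp [offT2])]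

theorem quasiDoubleB_iff_of_pos (hk : 0 < k) (B : ι → (Fin k → ι) → ℝ) :
    QuasiDoubleB B ↔ (∀ i, betaT B i < diagT B i) ∧ ∀ i j, i ≠ j →
      (diagT B i - B j (fun _ => i)) * deltaT B j <
        (diagT B i - betaT B i) * (diagT B j - B j (fun _ => i)) := by
  refine and_congr_right fun _ => forall₂_congr fun i j => imp_congr_right fun hij => ?_
  rw [deltaT_eq_add_deltaT2 hk B hij]
  constructor <;> intro h <;> linarith

end HigherOrder

variable {ι κ : Type*} [Fintype ι] [DecidableEq ι] [Fintype κ] [DecidableEq κ] {k : ℕ}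

theorem quasiDoubleB_subT (e : κ ↪ ι) {B : ι → (Fin k → ι) → ℝ} (h : QuasiDoubleB B) :
    QuasiDoubleB (subT e B) := by
  rcases Nat.eq_zero_or_pos k with rfl | hk
  · rw [quasiDoubleB_zero_iff] at h ⊢
    exact fun a => h (e a)
  rw [quasiDoubleB_iff_of_pos hk] at h ⊢
  obtain ⟨hdiag, hpair⟩ := h
  refine ⟨fun a => (betaT_subT_le e B a).trans_lt (hdiag (e a)), fun a b hab => ?_⟩
  simp only [diagT_subT]
  set c := subT e B b (fun _ => a)
  have hc : c ≤ betaT B (e b) :=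
    le_betaT B (const_mem_offT hk (e.injective.ne hab))
  have hβ := betaT_subT_le e B a
  have hΔ := deltaT_subT_le e B b
  have hΔ₀ := deltaT_nonneg (subT e B) b
  have hpos : 0 < (diagT B (e a) - betaT (subT e B) a) * (diagT B (e b) - c) :=
    mul_pos (by linarith [hdiag (e a)]) (by linarith [hdiag (e b)])
  rcases le_or_gt c (diagT B (e a)) with hca | hac
  · calc (diagT B (e a) - c) * deltaT (subT e B) b
        ≤ (diagT B (e a) - c) * deltaT B (e b) := by gcongr
      _ < (diagT B (e a) - betaT B (e a)) * (diagT B (e b) - c) :=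
        hpair (e a) (e b) (e.injective.ne hab)
      _ ≤ (diagT B (e a) - betaT (subT e B) a) * (diagT B (e b) - c) := by
        gcongr; linarith [hdiag (e b)]
  · exact lt_of_le_of_lt (mul_nonpos_of_nonpos_of_nonneg (by linarith) hΔ₀) hpos

theorem stmt10_general {n k : ℕ} (A : Fin n → (Fin k → Fin n) → ℝ) (h : QuasiDoubleB (barT A))
    (α : Finset (Fin n)) :
    QuasiDoubleB (barT (fun (i : {x // x ∈ α}) (t : Fin k → {x // x ∈ α}) =>
      A i.val (fun s => (t s).val))) := by
  have h_sub := quasiDoubleB_subT (Function.Embedding.subtype (· ∈ α)) h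
  rwa [← barT_subT] at h_sub

/-- Principal subtensors of quasi-double `B̄`-tensors are quasi-double `B̄`-tensors. -/
theorem stmt10 {n k : ℕ} (A : Fin n → (Fin k → Fin n) → ℝ) (h : QuasiDoubleB (barT A))
    (α : Finset (Fin n)) (hα : 2 ≤ α.card) :
    QuasiDoubleB (barT (fun (i : {x // x ∈ α}) (t : Fin k → {x // x ∈ α}) =>
      A i.val (fun s => (t s).val))) :=
  stmt10_general A h α
end
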